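/- Let n = 2m. For each integer k with 1 ≤ k ≤ 2^m, the sets S_k = { j ∈ Z/(2^m-1)Z : wt_n((2^m+1)j + (2^m-1)k) < m } and T_k = { j ∈ Z/(2^m-1)Z : wt_n((2^m+1)j + (2^m-1)k) > m } have the same cardinality, are disjoint, neither contains 0, and hence |S_k| ≤ 2^{m-1} - 1. -/

import Mathlib

/-! Reduced modulo `N = 2^n - 1`, a residue is an `n`-bit word: doubling rotates it cyclically
and negation (of a nonzero residue) complements it, so `wt n (2 u) = wt n u` and
`wt n (-u) = n - wt n u` for `N ∤ u`. With `n = 2m` and `v j = (2^m+1) j + (2^m-1) k` one has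
`v (2^m-1-j) ≡ -2^m v j (mod N)`, and `N ∤ v j` for `0 < j < 2^m - 1`; hence the reflection
`j ↦ 2^m-1-j` exchanges `S` and `T`. Finally `wt (v 0) = m`, which keeps `0` out of both sets. -/

/-- `wt n u`: the number of 1's in the binary expansion of the reduction of the
integer `u` modulo `2^n - 1`, taken in the residue system `{0, 1, ..., 2^n - 2}`. -/
def wt (n : ℕ) (u : ℤ) : ℕ :=
  (Nat.digits 2 ((u % ((2:ℤ)^n - 1)).toNat)).count 1

open Finset

def bitWeight (x : ℕ) : ℕ := (Nat.digits 2 x).count 1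

@[simp] lemma bitWeight_zero : bitWeight 0 = 0 := by simp [bitWeight]

lemma bitWeight_two_mul_add (q : ℕ) {b : ℕ} (hb : b < 2) :
    bitWeight (2 * q + b) = bitWeight q + b := by
  rcases Nat.eq_zero_or_pos (2 * q + b) with h | h
  · obtain ⟨rfl, rfl⟩ : q = 0 ∧ b = 0 := by omega
    simp
  · rw [bitWeight, Nat.digits_def' one_lt_two h, List.count_cons,
      show (2 * q + b) % 2 = b by omega, show (2 * q + b) / 2 = q by omega]
    interval_cases b <;> simp [bitWeight]

lemma bitWeight_add_two_pow_mul {t r : ℕ} (s : ℕ) (hr : r < 2 ^ t) :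
    bitWeight (r + 2 ^ t * s) = bitWeight r + bitWeight s := by
  induction t generalizing r with
  | zero =>
    obtain rfl : r = 0 := by simpa using hr
    simp
  | succ t ih =>
    obtain ⟨q, b, hb, rfl⟩ : ∃ q b, b < 2 ∧ r = 2 * q + b := ⟨r / 2, r % 2, by omega, by omega⟩
    rw [pow_succ] at hr ⊢
    rw [show 2 * q + b + 2 ^ t * 2 * s = 2 * (q + 2 ^ t * s) + b by ring,
      bitWeight_two_mul_add _ hb, bitWeight_two_mul_add _ hb, ih (by omega)]
    ring

lemma bitWeight_add_bitWeight_sub {n v : ℕ} (hv : v ≤ 2 ^ n - 1) :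
    bitWeight v + bitWeight (2 ^ n - 1 - v) = n := by
  induction n generalizing v with
  | zero =>
    obtain rfl : v = 0 := by simpa using hv
    simp
  | succ n ih =>
    obtain ⟨q, b, hb, rfl⟩ : ∃ q b, b < 2 ∧ v = 2 * q + b := ⟨v / 2, v % 2, by omega, by omega⟩
    have hpos := Nat.two_pow_pos n
    rw [pow_succ] at hv ⊢
    rw [show 2 ^ n * 2 - 1 - (2 * q + b) = 2 * (2 ^ n - 1 - q) + (1 - b) by omega,
      bitWeight_two_mul_add _ hb, bitWeight_two_mul_add _ (by omega)]
    have := ih (v := q) (by omega)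
    omega

lemma bitWeight_two_mul_mod {n v : ℕ} (hn : n ≠ 0) (hv : v < 2 ^ n - 1) :
    bitWeight (2 * v % (2 ^ n - 1)) = bitWeight v := by
  obtain ⟨t, rfl⟩ := Nat.exists_eq_add_one_of_ne_zero hn
  have hpos := Nat.two_pow_pos t
  rw [pow_succ] at hv ⊢
  by_cases hlow : v < 2 ^ t
  · rw [Nat.mod_eq_of_lt (by omega)]
    simpa using bitWeight_two_mul_add v (b := 0) two_pos
  · -- the top bit of `v` is rotated into the lowest position
    obtain ⟨r, rfl⟩ : ∃ r, v = r + 2 ^ t * 1 := ⟨v - 2 ^ t, by omega⟩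
    rw [show 2 * (r + 2 ^ t * 1) = 2 * r + 1 + (2 ^ t * 2 - 1) by omega, Nat.add_mod_right,
      Nat.mod_eq_of_lt (by omega), bitWeight_two_mul_add _ one_lt_two,
      bitWeight_add_two_pow_mul _ (by omega)]
    simp [bitWeight]

lemma wt_congr {n : ℕ} {u v : ℤ} (h : u ≡ v [ZMOD 2 ^ n - 1]) : wt n u = wt n v := by
  rw [wt, wt, h.eq]

lemma wt_natCast (n v : ℕ) : wt n v = bitWeight (v % (2 ^ n - 1)) := by
  have hcast : (2 : ℤ) ^ n - 1 = ((2 ^ n - 1 : ℕ) : ℤ) := by push_cast [Nat.one_le_two_pow]; ring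
  rw [wt, hcast, ← Int.natCast_mod, Int.toNat_natCast]
  rfl

lemma exists_natCast_modEq_wt_eq {n : ℕ} (hn : n ≠ 0) (u : ℤ) :
    ∃ v : ℕ, v < 2 ^ n - 1 ∧ u ≡ v [ZMOD 2 ^ n - 1] ∧ wt n u = bitWeight v := by
  have hN : (0 : ℤ) < 2 ^ n - 1 := by
    have := Nat.one_lt_two_pow hn
    linarith [show ((2 ^ n : ℕ) : ℤ) = 2 ^ n by push_cast; ring]
  refine ⟨(u % (2 ^ n - 1)).toNat, ?_, ?_, rfl⟩
  · rw [← Int.ofNat_lt, Int.toNat_of_nonneg (Int.emod_nonneg u hN.ne')]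
    push_cast [Nat.one_le_two_pow]
    exact Int.emod_lt_of_pos u hN
  · rw [Int.toNat_of_nonneg (Int.emod_nonneg u hN.ne')]
    exact (Int.mod_modEq u _).symm

lemma wt_two_mul {n : ℕ} (hn : n ≠ 0) (u : ℤ) : wt n (2 * u) = wt n u := by
  obtain ⟨v, hv, huv, hwt⟩ := exists_natCast_modEq_wt_eq hn u
  rw [hwt, wt_congr (huv.mul_left 2), ← bitWeight_two_mul_mod hn hv, ← wt_natCast]
  push_cast
  rfl

lemma wt_two_pow_mul {n : ℕ} (hn : n ≠ 0) (s : ℕ) (u : ℤ) : wt n (2 ^ s * u) = wt n u := by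
  induction s with
  | zero => rw [pow_zero, one_mul]
  | succ s ih => rw [pow_succ', mul_assoc, wt_two_mul hn, ih]

lemma wt_neg_add_wt {n : ℕ} (hn : n ≠ 0) {u : ℤ} (hu : ¬ (2 ^ n - 1 : ℤ) ∣ u) :
    wt n (-u) + wt n u = n := by
  obtain ⟨v, hv, huv, hwt⟩ := exists_natCast_modEq_wt_eq hn u
  have hv0 : v ≠ 0 := by
    rintro rfl
    exact hu (Int.modEq_zero_iff_dvd.mp huv)
  have hneg : -u ≡ ((2 ^ n - 1 - v : ℕ) : ℤ) [ZMOD 2 ^ n - 1] := by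
    rw [Int.modEq_iff_dvd] at huv ⊢
    push_cast [Nat.one_le_two_pow, hv.le]
    simpa [sub_sub_eq_add_sub, sub_add_eq_add_sub] using (dvd_refl _).sub huv
  rw [wt_congr hneg, wt_natCast, Nat.mod_eq_of_lt (by omega), hwt, add_comm]
  exact bitWeight_add_bitWeight_sub hv.le

section Reflection

variable {M c : ℕ} {f : ℕ → ℕ}

lemma card_filter_lt_eq_card_filter_gt (h0 : f 0 = c)
    (hrefl : ∀ j, 0 < j → j < M → f (M - j) + f j = 2 * c) :
    #{j ∈ range M | f j < c} = #{j ∈ range M | c < f j} := by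
  have hpos : ∀ j, f j ≠ c → 0 < j := fun j hj => Nat.pos_of_ne_zero (by rintro rfl; exact hj h0)
  apply card_nbij' (M - ·) (M - ·)
  · intro j hj
    simp only [coe_filter, mem_range, Set.mem_ofPred_eq] at hj ⊢
    have hj0 := hpos j hj.2.ne
    have := hrefl j hj0 hj.1
    omega
  · intro j hj
    simp only [coe_filter, mem_range, Set.mem_ofPred_eq] at hj ⊢
    have hj0 := hpos j hj.2.ne'
    have := hrefl j hj0 hj.1
    omega
  · intro j hj
    simp only [coe_filter, mem_range, Set.mem_ofPred_eq] at hj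
    exact Nat.sub_sub_self hj.1.le
  · intro j hj
    simp only [coe_filter, mem_range, Set.mem_ofPred_eq] at hj
    exact Nat.sub_sub_self hj.1.le

lemma two_mul_card_filter_lt_le (h0 : f 0 = c)
    (hrefl : ∀ j, 0 < j → j < M → f (M - j) + f j = 2 * c) :
    2 * #{j ∈ range M | f j < c} ≤ M - 1 := by
  have hdisj : Disjoint {j ∈ range M | f j < c} {j ∈ range M | c < f j} :=
    disjoint_filter.2 fun _ _ h => h.not_gt
  calc 2 * #{j ∈ range M | f j < c}
      = #({j ∈ range M | f j < c} ∪ {j ∈ range M | c < f j}) := by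
        rw [card_union_of_disjoint hdisj, ← card_filter_lt_eq_card_filter_gt h0 hrefl, two_mul]
    _ ≤ #(Ico 1 M) := card_le_card fun j hj => by
        simp only [mem_union, mem_filter, mem_range, mem_Ico] at hj ⊢
        have : j ≠ 0 := by rintro rfl; omega
        omega
    _ = M - 1 := Nat.card_Ico 1 M

end Reflection

lemma isCoprime_two_two_pow_sub_one {n : ℕ} (hn : n ≠ 0) : IsCoprime (2 : ℤ) (2 ^ n - 1) := by
  obtain ⟨t, rfl⟩ := Nat.exists_eq_add_one_of_ne_zero hn
  exact ⟨2 ^ t, -1, by rw [pow_succ]; ring⟩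

lemma not_two_pow_two_mul_sub_one_dvd {m : ℕ} (hm : m ≠ 0) {j : ℤ} (hj0 : 0 < j)
    (hj : j < 2 ^ m - 1) (k : ℤ) :
    ¬ (2 ^ (2 * m) - 1 : ℤ) ∣ (2 ^ m + 1) * j + (2 ^ m - 1) * k := by
  intro h
  have h2j : (2 ^ m - 1 : ℤ) ∣ 2 * j := by
    have hfac : (2 ^ m - 1 : ℤ) ∣ 2 ^ (2 * m) - 1 := ⟨2 ^ m + 1, by ring⟩
    have := hfac.trans h
    rw [show (2 ^ m + 1) * j + (2 ^ m - 1) * k = (2 ^ m - 1) * (j + k) + 2 * j by ring] at this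
    exact (dvd_add_right (dvd_mul_right _ _)).mp this
  have := Int.le_of_dvd hj0 ((isCoprime_two_two_pow_sub_one hm).symm.dvd_of_dvd_mul_left h2j)
  omega

lemma wt_two_pow_sub_one_mul {m k : ℕ} (hm : m ≠ 0) (hk0 : 1 ≤ k) (hk1 : k ≤ 2 ^ m) :
    wt (2 * m) ((2 ^ m - 1) * (k : ℤ)) = m := by
  have h1 : 1 ≤ 2 ^ m := Nat.one_le_two_pow
  have h2 : 2 ≤ 2 ^ m := Nat.le_self_pow hm 2
  have hcast : ((2 : ℤ) ^ m - 1) * k = (((2 ^ m - 1) * k : ℕ) : ℤ) := by push_cast [h1]; ring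
  have hlt : (2 ^ m - 1) * k < 2 ^ (2 * m) - 1 := by
    have h3 : 1 ≤ 2 ^ (2 * m) := Nat.one_le_two_pow
    zify [h1, h3]
    rw [two_mul, pow_add]
    nlinarith
  -- `(2^m - 1) k` has the `m` bits of `2^m - k` below those of `k - 1`, its complement
  have hsplit : (2 ^ m - 1) * k = (2 ^ m - 1 - (k - 1)) + 2 ^ m * (k - 1) := by
    zify [h1, hk0, hk1, show k - 1 ≤ 2 ^ m - 1 by omega]
    ring
  rw [hcast, wt_natCast, Nat.mod_eq_of_lt hlt, hsplit, bitWeight_add_two_pow_mul _ (by omega),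
    add_comm]
  exact bitWeight_add_bitWeight_sub (by omega)

lemma wt_reflect_add_wt {m : ℕ} (hm : m ≠ 0) {j k : ℤ}
    (hj : ¬ (2 ^ (2 * m) - 1 : ℤ) ∣ (2 ^ m + 1) * j + (2 ^ m - 1) * k) :
    wt (2 * m) ((2 ^ m + 1) * (2 ^ m - 1 - j) + (2 ^ m - 1) * k)
      + wt (2 * m) ((2 ^ m + 1) * j + (2 ^ m - 1) * k) = 2 * m := by
  have hn : 2 * m ≠ 0 := by omega
  set v := (2 ^ m + 1) * j + (2 ^ m - 1) * k
  have hcong : (2 ^ m + 1) * (2 ^ m - 1 - j) + (2 ^ m - 1) * k ≡ -(2 ^ m * v)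
      [ZMOD 2 ^ (2 * m) - 1] := by
    rw [Int.modEq_iff_dvd]
    exact ⟨-(1 + j + k), by ring⟩
  have hv : ¬ (2 ^ (2 * m) - 1 : ℤ) ∣ 2 ^ m * v := fun h =>
    hj ((isCoprime_two_two_pow_sub_one hn).pow_left.symm.dvd_of_dvd_mul_left h)
  have := wt_neg_add_wt hn hv
  rwa [wt_two_pow_mul hn, ← wt_congr hcong] at this

theorem stmt_6 (m k : ℕ) (hm : 0 < m) (hk0 : 1 ≤ k) (hk1 : k ≤ 2^m)
    (S T : Finset ℕ)
    (hS : S = (Finset.range (2^m - 1)).filter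
      (fun j : ℕ => wt (2*m) ((2^m + 1) * (j : ℤ) + (2^m - 1) * (k : ℤ)) < m))
    (hT : T = (Finset.range (2^m - 1)).filter
      (fun j : ℕ => m < wt (2*m) ((2^m + 1) * (j : ℤ) + (2^m - 1) * (k : ℤ)))) :
    S.card = T.card ∧ Disjoint S T ∧ 0 ∉ S ∧ 0 ∉ T ∧ S.card ≤ 2^(m-1) - 1 := by
  subst hS hT
  have hm' : m ≠ 0 := hm.ne'
  set f : ℕ → ℕ := fun j => wt (2 * m) ((2 ^ m + 1) * (j : ℤ) + (2 ^ m - 1) * (k : ℤ)) with hf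
  have h0 : f 0 = m := by
    simpa [hf] using wt_two_pow_sub_one_mul hm' hk0 hk1
  have hrefl : ∀ j, 0 < j → j < 2 ^ m - 1 → f (2 ^ m - 1 - j) + f j = 2 * m := by
    intro j hj0 hj
    have hj' : (j : ℤ) < 2 ^ m - 1 := by
      zify [Nat.one_le_two_pow] at hj
      exact hj
    simp only [hf]
    push_cast [Nat.one_le_two_pow, hj.le]
    exact wt_reflect_add_wt hm' (not_two_pow_two_mul_sub_one_dvd hm' (by exact_mod_cast hj0) hj' k)
  have hpow : 2 ^ m = 2 * 2 ^ (m - 1) := by rw [← pow_succ', Nat.sub_add_cancel hm]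
  have hbound : #{j ∈ range (2 ^ m - 1) | f j < m} ≤ 2 ^ (m - 1) - 1 := by
    have := two_mul_card_filter_lt_le h0 hrefl
    omega
  exact ⟨card_filter_lt_eq_card_filter_gt h0 hrefl, disjoint_filter.2 fun _ _ h => h.not_gt,
    fun h => (mem_filter.1 h).2.ne h0, fun h => (mem_filter.1 h).2.ne' h0, hbound⟩
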